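/- arXiv:quant-ph/0504067 — 3 statements merged into one kernel-verified Lean document; each statement's English description precedes it below -/
import Mathlib

section
/- Let G be a finite group, K ⊴ G a proper normal subgroup, and H ≤ G a subgroup that intersects every coset of K (equivalently, HK = G). Let σ be any nontrivial finite-dimensional irreducible complex representation of the quotient group G/K, and let τ = σ ∘ φ be its lift to G along the quotient homomorphism φ : G → G/K. Then τ(H) := (1/|H|) Σ_{h∈H} τ(h) = 0; in particular H has a missing harmonic. -/
open scoped Classical

/-!
The map `H → G ⧸ K` is a surjective homomorphism, so its fibres all have `|H ⊓ K|` elements and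
the sum of `σ` over `H` is `|H ⊓ K|` times the sum `π` of `σ` over all of `G ⧸ K`. Translation
invariance makes `π` commute with `σ`, so by Schur's lemma `π = c • id`; then `σ x * π = π` reads
`c • σ x = c • id`, and `σ x ≠ id` forces `c = 0`.
-/

open CategoryTheory

theorem MonoidHom.sum_comp_eq_card_ker_smul_sum {H Q M : Type*} [Group H] [Fintype H] [Group Q]
    [Fintype Q] [AddCommMonoid M] {f : H →* Q} (hf : Function.Surjective f) (F : Q → M) :
    ∑ h, F (f h) = Nat.card f.ker • ∑ q, F q := by
  rw [← Fintype.sum_fiberwise' f F, Finset.smul_sum]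
  refine Fintype.sum_congr _ _ fun q => ?_
  rw [Finset.sum_const, Finset.card_univ, ← Nat.card_eq_fintype_card]
  exact congrArg (· • F q) (Nat.card_congr (f.fiberEquivKerOfSurjective hf q))

namespace FDRep

section CommRing

variable {R G : Type*} [CommRing R]

def homMk [Monoid G] {V W : FDRep R G} (f : V →ₗ[R] W) (hf : ∀ g, f ∘ₗ V.ρ g = W.ρ g ∘ₗ f) :
    V ⟶ W :=
  ⟨InducedCategory.homMk (ModuleCat.ofHom f), fun g => by
    ext1
    exact hf g⟩

variable [Group G] [Fintype G] (V : FDRep R G)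

theorem ρ_mul_sum_ρ (x : G) : V.ρ x * ∑ g, V.ρ g = ∑ g, V.ρ g := by
  simp only [Finset.mul_sum, ← map_mul]
  exact Equiv.sum_comp (Equiv.mulLeft x) (⇑V.ρ)

theorem sum_ρ_mul_ρ (x : G) : (∑ g, V.ρ g) * V.ρ x = ∑ g, V.ρ g := by
  simp only [Finset.sum_mul, ← map_mul]
  exact Equiv.sum_comp (Equiv.mulRight x) (⇑V.ρ)

end CommRing

section IsAlgClosed

variable {k G : Type*} [Field k] [IsAlgClosed k]

theorem exists_eq_smul_id_of_commute [Monoid G] (V : FDRep k G) [Simple V] (f : V →ₗ[k] V)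
    (hf : ∀ g, Commute f (V.ρ g)) : ∃ c : k, f = c • LinearMap.id := by
  obtain ⟨c, hc⟩ := endomorphism_simple_eq_smul_id k (homMk f fun g => (hf g).eq)
  exact ⟨c, (congrArg (fun φ => φ.hom.hom.hom) hc).symm⟩

theorem sum_ρ_eq_zero [Group G] [Fintype G] (V : FDRep k G) [Simple V]
    (hV : ∃ x, V.ρ x ≠ LinearMap.id) : ∑ g, V.ρ g = 0 := by
  obtain ⟨x, hx⟩ := hV
  obtain ⟨c, hc⟩ := exists_eq_smul_id_of_commute V (∑ g, V.ρ g) fun g =>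
    (sum_ρ_mul_ρ V g).trans (ρ_mul_sum_ρ V g).symm
  have hcx : c • V.ρ x = c • LinearMap.id := by
    have := ρ_mul_sum_ρ V x
    rwa [hc, mul_smul_comm, Module.End.mul_eq_comp, LinearMap.comp_id] at this
  have hc0 : c = 0 := by
    by_contra hc0
    exact hx (smul_right_injective _ hc0 hcx)
  rw [hc, hc0, zero_smul]

end IsAlgClosed

end FDRep

theorem lift_of_nontrivial_irreducible_is_missing_harmonic_general
    {G : Type} [Group G] [Fintype G] (K : Subgroup G) [K.Normal]
    (H : Subgroup G) (hHK : ∀ g : G, ∃ h ∈ H, ∃ k ∈ K, g = h * k)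
    (σ : FDRep ℂ (G ⧸ K)) [CategoryTheory.Simple σ]
    (hσ : ∃ x : G ⧸ K, σ.ρ x ≠ LinearMap.id) :
    (Fintype.card H : ℂ)⁻¹ •
        (∑ h : H, σ.ρ (QuotientGroup.mk' K (h : G))) = 0 := by
  have hsurj : Function.Surjective ((QuotientGroup.mk' K).comp H.subtype) := by
    intro q
    obtain ⟨g, rfl⟩ := QuotientGroup.mk'_surjective K q
    obtain ⟨h, hh, k, hk, rfl⟩ := hHK g
    exact ⟨⟨h, hh⟩, by simp [hk]⟩
  rw [show ∑ h : H, σ.ρ (QuotientGroup.mk' K h) = _ from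
      MonoidHom.sum_comp_eq_card_ker_smul_sum hsurj σ.ρ,
    FDRep.sum_ρ_eq_zero σ hσ, smul_zero, smul_zero]

/-- Let `K` be a proper normal subgroup of a finite group `G`, and let
`H ≤ G` intersect every coset of `K` (equivalently, `HK = G`).  If `σ` is a nontrivial
finite-dimensional irreducible complex representation of `G ⧸ K` and `τ = σ ∘ φ` is its
lift to `G` along the quotient map `φ : G → G ⧸ K`, then the averaging operator
`τ(H) = (1/|H|) ∑_{h ∈ H} τ(h)` is zero; in particular `H` has a missing harmonic. -/
theorem lift_of_nontrivial_irreducible_is_missing_harmonic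
    {G : Type} [Group G] [Fintype G] (K : Subgroup G) [K.Normal] (hK : K ≠ ⊤)
    (H : Subgroup G) (hHK : ∀ g : G, ∃ h ∈ H, ∃ k ∈ K, g = h * k)
    (σ : FDRep ℂ (G ⧸ K)) [CategoryTheory.Simple σ]
    (hσ : ∃ x : G ⧸ K, σ.ρ x ≠ LinearMap.id) :
    (Fintype.card H : ℂ)⁻¹ •
        (∑ h : H, σ.ρ (QuotientGroup.mk' K (h : G))) = 0 :=
  lift_of_nontrivial_irreducible_is_missing_harmonic_general K H hHK σ hσ
end

section
/- Let G be a finite group, H ≤ G a subgroup, k ≥ 1, and η an irreducible complex representation of G with η(H) := (1/|H|) Σ_{h∈H} η(h) = 0 (a missing harmonic of H). Let ρ be the k-register coset state operator on ℂ[G^k], and for nonempty I ⊆ {1,…,k} let Π_η^I := (d_η/|G|) Σ_{g∈G} χ_η(g)* R_I(g). Then Π_η^I ∘ ρ = 0. -/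
open scoped Classical

/-- The right-multiplication operator `R_I(g)` on `ℂ[G^k]`: it permutes the basis
vectors `|x⟩` by `x ↦ x'` where `x'_i = x_i g` for `i ∈ I` and `x'_i = x_i` otherwise. -/
def Rop {G : Type*} [Group G] (k : ℕ) (I : Finset (Fin k)) (g : G) :
    ((Fin k → G) → ℂ) →ₗ[ℂ] ((Fin k → G) → ℂ) where
  toFun f := fun x => f fun i => if i ∈ I then x i * g⁻¹ else x i
  map_add' _ _ := rfl
  map_smul' _ _ := rfl

/-- The standard basis vector `|x⟩` of `ℂ[G^k]`. -/
noncomputable def delta {G : Type*} [Group G] (k : ℕ) (x : Fin k → G) :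
    (Fin k → G) → ℂ := fun y => if y = x then 1 else 0

/-- The coset vector `|cH^k⟩ = |H|^{-k/2} ∑_{h ∈ H^k} |ch⟩` in `ℂ[G^k]`. -/
noncomputable def cosetVec {G : Type*} [Group G] [Fintype G] (H : Subgroup G) (k : ℕ)
    (c : Fin k → G) : (Fin k → G) → ℂ :=
  ((Real.sqrt ((Fintype.card H : ℝ) ^ k) : ℂ))⁻¹ •
    ∑ h : Fin k → H, delta k fun i => c i * (h i : G)

/-- The outer product `|v⟩⟨w|` on `ℂ[G^k]`. -/
noncomputable def outer {G : Type*} [Group G] [Fintype G] (k : ℕ)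
    (v w : (Fin k → G) → ℂ) : ((Fin k → G) → ℂ) →ₗ[ℂ] ((Fin k → G) → ℂ) where
  toFun f := (∑ x : Fin k → G, (starRingEnd ℂ) (w x) * f x) • v
  map_add' f g := by
    simp [mul_add, Finset.sum_add_distrib, add_smul]
  map_smul' c f := by
    simp only [Pi.smul_apply, smul_eq_mul, RingHom.id_apply, smul_smul, Finset.mul_sum]
    congr 1
    exact Finset.sum_congr rfl fun x _ => by ring

/-- The `k`-register coset state `ρ = |G|^{-k} ∑_{c ∈ G^k} |cH^k⟩⟨cH^k|` on `ℂ[G^k]`. -/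
noncomputable def rhoState {G : Type*} [Group G] [Fintype G] (H : Subgroup G) (k : ℕ) :
    ((Fin k → G) → ℂ) →ₗ[ℂ] ((Fin k → G) → ℂ) :=
  ((Fintype.card G : ℂ) ^ k)⁻¹ •
    ∑ c : Fin k → G, outer k (cosetVec H k c) (cosetVec H k c)

/-- The isotypic projection `Π_η^I = (d_η/|G|) ∑_{g ∈ G} χ_η(g)* R_I(g)` on `ℂ[G^k]`,
projecting onto the `η`-isotypic component of the diagonal right `G`-action on the
coordinates in `I`. -/
noncomputable def piProj {G : Type} [Group G] [Fintype G] (η : FDRep ℂ G) (k : ℕ)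
    (I : Finset (Fin k)) : ((Fin k → G) → ℂ) →ₗ[ℂ] ((Fin k → G) → ℂ) :=
  ((Module.finrank ℂ η : ℂ) / (Fintype.card G : ℂ)) •
    ∑ g : G, (starRingEnd ℂ) (η.character g) • Rop k I g

section Aux
variable {G : Type} [Group G] [Fintype G]

lemma sum_char_coset (η : FDRep ℂ G) (H : Subgroup G)
    (hη : (∑ h : H, η.ρ (h : G)) = 0) (a : G) :
    ∑ t : H, η.character ((t : G) * a) = 0 := by
  have h1 : ∀ t : H, η.character ((t : G) * a)
      = LinearMap.trace ℂ η (η.ρ (t : G) * η.ρ a) := by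
    intro t; rw [FDRep.character, map_mul]
  simp_rw [h1]
  rw [← map_sum, ← Finset.sum_mul, hη, zero_mul, map_zero]

lemma cosetVec_apply (H : Subgroup G) (k : ℕ) (c x : Fin k → G) :
    cosetVec H k c x = ((Real.sqrt ((Fintype.card H : ℝ) ^ k) : ℂ))⁻¹ *
      (if ∀ i, (c i)⁻¹ * x i ∈ H then 1 else 0) := by
  rw [cosetVec, Pi.smul_apply, Finset.sum_apply, smul_eq_mul]
  congr 1
  by_cases hx : ∀ i, (c i)⁻¹ * x i ∈ H
  · rw [if_pos hx,
      Fintype.sum_eq_single (fun i => (⟨(c i)⁻¹ * x i, hx i⟩ : H))]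
    · rw [delta, if_pos]
      funext i
      simp [← mul_assoc]
    · intro h hne
      rw [delta, if_neg]
      intro hxe
      apply hne
      funext i
      have := congrFun hxe i
      ext
      simpa [eq_inv_mul_iff_mul_eq] using this.symm
  · rw [if_neg hx]
    apply Finset.sum_eq_zero
    intro h _
    rw [delta, if_neg]
    intro hxe
    apply hx
    intro i
    rw [congrFun hxe i]
    simpa using (h i).2

lemma piProj_cosetVec (H : Subgroup G) (k : ℕ) (η : FDRep ℂ G)
    (hη : (∑ h : H, η.ρ (h : G)) = 0)
    (I : Finset (Fin k)) (hI : I.Nonempty) (c : Fin k → G) :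
    piProj η k I (cosetVec H k c) = 0 := by
  obtain ⟨i₀, hi₀⟩ := hI
  funext y
  simp only [piProj, LinearMap.smul_apply, LinearMap.coe_sum, Finset.sum_apply,
    Pi.smul_apply, smul_eq_mul, Rop, LinearMap.coe_mk, AddHom.coe_mk, Pi.zero_apply,
    cosetVec_apply]
  set a : G := (c i₀)⁻¹ * y i₀ with ha
  have key : ∑ g : G, (starRingEnd ℂ) (η.character g) *
      (if ∀ i, (c i)⁻¹ * (if i ∈ I then y i * g⁻¹ else y i) ∈ H then (1:ℂ) else 0) = 0 := by
    by_cases hc : (∀ i, i ∉ I → (c i)⁻¹ * y i ∈ H) ∧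
        (∀ i ∈ I, (c i)⁻¹ * y i * a⁻¹ ∈ H)
    · rw [← Equiv.sum_comp (Equiv.mulRight a) fun g => (starRingEnd ℂ) (η.character g) *
        (if ∀ i, (c i)⁻¹ * (if i ∈ I then y i * g⁻¹ else y i) ∈ H then (1:ℂ) else 0)]
      have hcond : ∀ u : G,
          (∀ i, (c i)⁻¹ * (if i ∈ I then y i * ((Equiv.mulRight a) u)⁻¹ else y i) ∈ H)
            ↔ u ∈ H := by
        intro u
        simp only [Equiv.coe_mulRight]
        constructor
        · intro hall
          have h0 := hall i₀
          rw [if_pos hi₀] at h0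
          have : (c i₀)⁻¹ * (y i₀ * (u * a)⁻¹) = u⁻¹ := by
            rw [ha]; group
          rw [this] at h0
          exact (H.inv_mem_iff).mp h0
        · intro hu i
          by_cases hiI : i ∈ I
          · rw [if_pos hiI]
            have : (c i)⁻¹ * (y i * (u * a)⁻¹) = ((c i)⁻¹ * y i * a⁻¹) * u⁻¹ := by
              group
            rw [this]
            exact H.mul_mem (hc.2 i hiI) (H.inv_mem hu)
          · rw [if_neg hiI]
            exact hc.1 i hiI
      have step : ∀ u : G, (starRingEnd ℂ) (η.character ((Equiv.mulRight a) u)) *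
          (if ∀ i, (c i)⁻¹ * (if i ∈ I then y i * ((Equiv.mulRight a) u)⁻¹ else y i) ∈ H
            then (1:ℂ) else 0)
          = if u ∈ H then (starRingEnd ℂ) (η.character (u * a)) else 0 := by
        intro u
        by_cases hu : u ∈ H
        · rw [if_pos ((hcond u).mpr hu), if_pos hu, Equiv.coe_mulRight, mul_one]
        · rw [if_neg (fun h => hu ((hcond u).mp h)), if_neg hu, mul_zero]
      rw [Finset.sum_congr rfl fun u _ => step u]
      have h2 : (∑ u : G, if u ∈ H then (starRingEnd ℂ) (η.character (u * a)) else 0)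
          = ∑ t : H, (starRingEnd ℂ) (η.character ((t : G) * a)) := by
        rw [← Finset.sum_filter]
        apply Finset.sum_subtype
        intro u; simp
      rw [h2, ← map_sum, sum_char_coset η H hη a, map_zero]
    · apply Finset.sum_eq_zero
      intro g _
      rw [if_neg, mul_zero]
      intro hall
      apply hc
      constructor
      · intro i hiI
        have := hall i
        rwa [if_neg hiI] at this
      · intro i hiI
        have h1 := hall i
        rw [if_pos hiI] at h1
        have h2 := hall i₀
        rw [if_pos hi₀] at h2
        have : (c i)⁻¹ * y i * a⁻¹
            = ((c i)⁻¹ * (y i * g⁻¹)) * ((c i₀)⁻¹ * (y i₀ * g⁻¹))⁻¹ := by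
          rw [ha]; group
        rw [this]
        exact H.mul_mem h1 (H.inv_mem h2)
  have rearr : ∀ g : G, (starRingEnd ℂ) (η.character g) *
      (((Real.sqrt ((Fintype.card H : ℝ) ^ k) : ℂ))⁻¹ *
        (if ∀ i, (c i)⁻¹ * (if i ∈ I then y i * g⁻¹ else y i) ∈ H then (1:ℂ) else 0))
      = ((Real.sqrt ((Fintype.card H : ℝ) ^ k) : ℂ))⁻¹ *
        ((starRingEnd ℂ) (η.character g) *
        (if ∀ i, (c i)⁻¹ * (if i ∈ I then y i * g⁻¹ else y i) ∈ H then (1:ℂ) else 0)) :=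
    fun g => by ring
  rw [Finset.sum_congr rfl fun g _ => rearr g, ← Finset.mul_sum, key, mul_zero, mul_zero]

end Aux

/-- If `η` is a missing harmonic of `H` (that is,
`η(H) = (1/|H|) ∑_{h ∈ H} η(h) = 0`), then for every nonempty `I ⊆ {1,…,k}` the isotypic
projection `Π_η^I` annihilates the `k`-register coset state: `Π_η^I ∘ ρ = 0`. -/
theorem piProj_comp_rhoState_eq_zero
    {G : Type} [Group G] [Fintype G] (H : Subgroup G) (k : ℕ) (hk : 1 ≤ k)
    (η : FDRep ℂ G) [CategoryTheory.Simple η]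
    (hη : (Fintype.card H : ℂ)⁻¹ • (∑ h : H, η.ρ (h : G)) = 0)
    (I : Finset (Fin k)) (hI : I.Nonempty) :
    piProj η k I ∘ₗ rhoState H k = 0 := by
  have hcard : (Fintype.card H : ℂ) ≠ 0 := Nat.cast_ne_zero.mpr Fintype.card_ne_zero
  have hsum : (∑ h : H, η.ρ (h : G)) = 0 := by
    rcases smul_eq_zero.mp hη with h | h
    · exact absurd h (inv_ne_zero hcard)
    · exact h
  apply LinearMap.ext
  intro f
  rw [LinearMap.comp_apply, rhoState, LinearMap.smul_apply, map_smul, LinearMap.sum_apply,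
    map_sum, LinearMap.zero_apply]
  have h0 : ∀ c : Fin k → G,
      piProj η k I (outer k (cosetVec H k c) (cosetVec H k c) f) = 0 := by
    intro c
    have hout : outer k (cosetVec H k c) (cosetVec H k c) f
        = (∑ x : Fin k → G, (starRingEnd ℂ) (cosetVec H k c x) * f x) • cosetVec H k c := rfl
    rw [hout, map_smul, piProj_cosetVec H k η hsum I hI c, smul_zero]
  rw [Finset.sum_congr rfl fun c _ => h0 c, Finset.sum_const, smul_zero, smul_zero]
end

section
/- Let V be a finite-dimensional complex inner product space of dimension D, and let W₁, …, W_m ⊆ V be subspaces, each of dimension d with 0 < d < D, whose orthogonal projections Π₁, …, Π_m satisfy tr(Π_i Π_j) = d²/D for all i ≠ j (i.e., the family is independent). Let W = span(W₁ ∪ ⋯ ∪ W_m). Then dim W / D ≥ 1 − 1/(1 + md/(D−d)); equivalently, dim W ≥ mdD/(D + (m−1)d). -/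
/-!
Put `S = Π₁ + ⋯ + Π_m`. It is self-adjoint with range inside `W`, so Cauchy–Schwarz on its
nonzero eigenvalues gives `(tr S)² ≤ rank S · tr S² ≤ dim W · tr S²`. Independence evaluates
both traces, `tr S = md` and `tr S² = Σᵢⱼ tr(Πᵢ Πⱼ) = md + m(m-1)d²/D`, and solving for `dim W`
gives the bound.
-/

open Module LinearMap Finset

section

variable {𝕜 E : Type*} [RCLike 𝕜] [NormedAddCommGroup E] [InnerProductSpace 𝕜 E]
  [FiniteDimensional 𝕜 E]

namespace LinearMap.IsSymmetric

variable {T : E →ₗ[𝕜] E} (hT : T.IsSymmetric) {n : ℕ} (hn : finrank 𝕜 E = n)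

lemma card_eigenvalues_ne_zero : #{i | hT.eigenvalues hn i ≠ 0} = finrank 𝕜 (range T) := by
  have hker := hT.card_filter_eigenvalues_eq hn 0
  rw [Module.End.eigenspace_zero] at hker
  have hsplit := card_filter_add_card_filter_not (s := univ) (hT.eigenvalues hn · = 0)
  have := T.finrank_range_add_finrank_ker
  simp only [RCLike.ofReal_eq_zero, card_univ, Fintype.card_fin] at hker hsplit
  simp only [ne_eq]
  omega

lemma re_trace_comp_self : RCLike.re (trace 𝕜 E (T ∘ₗ T)) = ∑ i, hT.eigenvalues hn i ^ 2 := by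
  rw [trace_eq_sum_inner _ (hT.eigenvectorBasis hn), map_sum]
  refine sum_congr rfl fun i _ => ?_
  rw [comp_apply, hT.apply_eigenvectorBasis, map_smul, hT.apply_eigenvectorBasis, smul_smul,
    inner_smul_right, inner_self_eq_norm_sq_to_K, (hT.eigenvectorBasis hn).orthonormal.1 i]
  simp [sq]

theorem sq_re_trace_le_finrank_range_mul (hT : T.IsSymmetric) :
    RCLike.re (trace 𝕜 E T) ^ 2 ≤ finrank 𝕜 (range T) * RCLike.re (trace 𝕜 E (T ∘ₗ T)) := by
  set μ := hT.eigenvalues rfl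
  have hsq : ∑ i with μ i ≠ 0, μ i ^ 2 = ∑ i, μ i ^ 2 :=
    sum_filter_of_ne fun _ _ => (pow_ne_zero_iff two_ne_zero).mp
  rw [hT.re_trace_eq_sum_eigenvalues rfl, hT.re_trace_comp_self rfl,
    ← hT.card_eigenvalues_ne_zero rfl, ← sum_filter_ne_zero, ← hsq]
  exact sq_sum_le_card_mul_sum_sq

end LinearMap.IsSymmetric

namespace Submodule

lemma trace_starProjection (K : Submodule 𝕜 E) :
    trace 𝕜 E K.starProjection.toLinearMap = finrank 𝕜 K := by
  have hproj := IsIdempotentElem.isProj_range K.starProjection.toLinearMap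
    (ContinuousLinearMap.IsIdempotentElem.toLinearMap K.isIdempotentElem_starProjection)
  rw [show range K.starProjection.toLinearMap = K from K.range_starProjection] at hproj
  exact hproj.trace

variable {ι : Type*} [Fintype ι]

lemma range_sum_starProjection_le_iSup (K : ι → Submodule 𝕜 E) :
    range (∑ i, (K i).starProjection.toLinearMap) ≤ ⨆ i, K i := by
  rintro _ ⟨x, rfl⟩
  rw [LinearMap.sum_apply]
  exact sum_mem fun i _ => mem_iSup_of_mem i ((K i).starProjection_apply_mem x)

theorem sq_sum_finrank_le_finrank_iSup_mul (K : ι → Submodule 𝕜 E) :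
    (∑ i, (finrank 𝕜 (K i) : ℝ)) ^ 2 ≤ finrank 𝕜 ↥(⨆ i, K i) *
      RCLike.re (∑ i, ∑ j,
        trace 𝕜 E ((K i).starProjection.toLinearMap ∘ₗ (K j).starProjection.toLinearMap)) := by
  set S := ∑ i, (K i).starProjection.toLinearMap
  have hS : S.IsSymmetric := isSymmetric_sum _ fun i _ => (K i).starProjection_isSymmetric
  have htrace : RCLike.re (trace 𝕜 E S) = ∑ i, (finrank 𝕜 (K i) : ℝ) := by
    simp [S, map_sum, trace_starProjection]
  have hsquare : trace 𝕜 E (S ∘ₗ S) = ∑ i, ∑ j,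
      trace 𝕜 E ((K i).starProjection.toLinearMap ∘ₗ (K j).starProjection.toLinearMap) := by
    rw [← Module.End.mul_eq_comp, sum_mul_sum]
    simp only [map_sum, Module.End.mul_eq_comp]
  have hsquare_nonneg : 0 ≤ RCLike.re (trace 𝕜 E (S ∘ₗ S)) :=
    hS.re_trace_comp_self rfl ▸ sum_nonneg fun i _ => sq_nonneg _
  calc (∑ i, (finrank 𝕜 (K i) : ℝ)) ^ 2
      ≤ finrank 𝕜 (range S) * RCLike.re (trace 𝕜 E (S ∘ₗ S)) :=
        htrace ▸ hS.sq_re_trace_le_finrank_range_mul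
    _ ≤ finrank 𝕜 ↥(⨆ i, K i) * RCLike.re (trace 𝕜 E (S ∘ₗ S)) := by
        gcongr
        exact finrank_mono (range_sum_starProjection_le_iSup K)
    _ = _ := by rw [hsquare]

end Submodule

end

lemma mul_mul_div_le_of_sq_le_mul {n m d D : ℝ} (hn : 0 ≤ n) (hm : 0 ≤ m) (hd : 0 ≤ d)
    (hdD : d < D) (h : (m * d) ^ 2 ≤ n * (m * d + m * (m - 1) * (d ^ 2 / D))) :
    m * d * D / (D + (m - 1) * d) ≤ n := by
  have hD : 0 < D := hd.trans_lt hdD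
  have hQ : 0 < D + (m - 1) * d := by nlinarith
  have hmd : 0 ≤ m * d := mul_nonneg hm hd
  have key : m * d * (m * d * D) ≤ m * d * (n * (D + (m - 1) * d)) := by
    have := mul_le_mul_of_nonneg_right h hD.le
    field_simp at this
    linarith
  rw [div_le_iff₀ hQ]
  rcases hmd.eq_or_lt with h0 | hpos
  · rw [← h0, zero_mul]
    positivity
  · exact le_of_mul_le_mul_left key hpos

lemma one_sub_one_div_one_add_div_eq {m d D : ℝ} (hm : 0 ≤ m) (hd : 0 ≤ d) (hdD : d < D) :
    1 - 1 / (1 + m * d / (D - d)) = m * d * D / (D + (m - 1) * d) / D := by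
  have hD : 0 < D := hd.trans_lt hdD
  have hDd : 0 < D - d := sub_pos.mpr hdD
  have hQ : 0 < D + (m - 1) * d := by nlinarith
  rw [show 1 + m * d / (D - d) = (D + (m - 1) * d) / (D - d) by field_simp; ring]
  field_simp
  ring

theorem dim_span_of_independent_family_general
    {V : Type*} [NormedAddCommGroup V] [InnerProductSpace ℂ V] [FiniteDimensional ℂ V]
    (D d m : ℕ) (hdD : d < D)
    (W : Fin m → Submodule ℂ V) (hdim : ∀ i, Module.finrank ℂ (W i) = d)
    (hind : ∀ i j, i ≠ j →
      LinearMap.trace ℂ V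
          (((W i).subtypeL.comp ((W i).orthogonalProjection)).toLinearMap ∘ₗ
            ((W j).subtypeL.comp ((W j).orthogonalProjection)).toLinearMap) =
        (d : ℂ) ^ 2 / (D : ℂ)) :
    (Module.finrank ℂ ↥(⨆ i, W i) : ℝ) / (D : ℝ) ≥
        1 - 1 / (1 + (m : ℝ) * d / ((D : ℝ) - d)) ∧
      (Module.finrank ℂ ↥(⨆ i, W i) : ℝ) ≥
        (m : ℝ) * d * D / ((D : ℝ) + ((m : ℝ) - 1) * d) := by
  -- shaped so that `sum_ite_eq` collapses the diagonal
  have hentry : ∀ i j, trace ℂ V ((W i).starProjection.toLinearMap ∘ₗ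
      (W j).starProjection.toLinearMap) =
        (d : ℂ) ^ 2 / D + if i = j then d - (d : ℂ) ^ 2 / D else 0 := by
    intro i j
    split_ifs with hij
    · rw [hij, ← Module.End.mul_eq_comp, (ContinuousLinearMap.IsIdempotentElem.toLinearMap
        (W j).isIdempotentElem_starProjection).eq, Submodule.trace_starProjection, hdim]
      ring
    · rw [add_zero]
      exact hind i j hij
  have hpairs : ∑ i, ∑ j, trace ℂ V ((W i).starProjection.toLinearMap ∘ₗ
      (W j).starProjection.toLinearMap) = ((m * d + m * (m - 1) * (d ^ 2 / D) : ℝ) : ℂ) := by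
    simp only [hentry, sum_add_distrib, sum_ite_eq, mem_univ, if_true, sum_const, card_univ,
      Fintype.card_fin, nsmul_eq_mul]
    push_cast
    ring
  have hcs := Submodule.sq_sum_finrank_le_finrank_iSup_mul W
  rw [hpairs, RCLike.re_to_complex, Complex.ofReal_re] at hcs
  simp only [hdim, sum_const, card_univ, Fintype.card_fin, nsmul_eq_mul] at hcs
  have hbound : (m : ℝ) * d * D / ((D : ℝ) + ((m : ℝ) - 1) * d) ≤
      Module.finrank ℂ ↥(⨆ i, W i) :=
    mul_mul_div_le_of_sq_le_mul (by positivity) (by positivity) (by positivity)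
      (by exact_mod_cast hdD) hcs
  refine ⟨?_, hbound⟩
  rw [ge_iff_le, one_sub_one_div_one_add_div_eq (by positivity) (by positivity)
    (by exact_mod_cast hdD)]
  gcongr

/-- Let `V` be a finite-dimensional complex inner product space of
dimension `D`, and let `W₁, …, W_m ⊆ V` be subspaces, each of dimension `d` with
`0 < d < D`, whose orthogonal projections `Π₁, …, Π_m` satisfy `tr(Π_i Π_j) = d²/D` for
all `i ≠ j` (the family is independent).  Then the span `W` of the `W_i` satisfies
`dim W / D ≥ 1 − 1/(1 + md/(D−d))`; equivalently `dim W ≥ mdD/(D + (m−1)d)`. -/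
theorem dim_span_of_independent_family
    {V : Type*} [NormedAddCommGroup V] [InnerProductSpace ℂ V] [FiniteDimensional ℂ V]
    (D d m : ℕ) (hD : Module.finrank ℂ V = D) (hd0 : 0 < d) (hdD : d < D)
    (W : Fin m → Submodule ℂ V) (hdim : ∀ i, Module.finrank ℂ (W i) = d)
    (hind : ∀ i j, i ≠ j →
      LinearMap.trace ℂ V
          (((W i).subtypeL.comp ((W i).orthogonalProjection)).toLinearMap ∘ₗ
            ((W j).subtypeL.comp ((W j).orthogonalProjection)).toLinearMap) =
        (d : ℂ) ^ 2 / (D : ℂ)) :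
    (Module.finrank ℂ ↥(⨆ i, W i) : ℝ) / (D : ℝ) ≥
        1 - 1 / (1 + (m : ℝ) * d / ((D : ℝ) - d)) ∧
      (Module.finrank ℂ ↥(⨆ i, W i) : ℝ) ≥
        (m : ℝ) * d * D / ((D : ℝ) + ((m : ℝ) - 1) * d) :=
  dim_span_of_independent_family_general D d m hdD W hdim hind
end
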